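/- arXiv:1311.4822 — 2 statements merged into one kernel-verified Lean document; each statement's English description precedes it below -/
import Mathlib

section
/- The newborn submatrices have the same spectral radii as the full matrices: ρ(N̄) = ρ(N) = R₀ and ρ(W̄) = ρ(W). -/
/-! Outside the newborn indices every row of `F` vanishes, hence so does every row of
`W = F (I - DS)⁻¹` and, since `D` does not mix stages, of `N = D W`. Such a matrix `B` factors as
`U V`, with `U` the inclusion of the newborn coordinates and `V` the newborn rows of `B`, while
`V U` is the newborn submatrix `B̄`. By Sylvester's identity `Xⁿ χ(U V) = X^(mn) χ(V U)`, the
products `U V` and `V U` have the same nonzero eigenvalues, hence the same spectral radius. -/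

open Matrix BigOperators

/-- Spectral radius of a real square matrix: the maximum modulus of its complex
eigenvalues (elements of the spectrum of the matrix viewed over `ℂ`). -/
noncomputable def specRad {ι : Type*} [Fintype ι] [DecidableEq ι]
    (M : Matrix ι ι ℝ) : ℝ :=
  sSup {r : ℝ | ∃ μ : ℂ, μ ∈ spectrum ℂ (M.map Complex.ofReal) ∧ r = ‖μ‖}

/-- The induced `L¹` operator norm of a real matrix: the maximum absolute column sum. -/
noncomputable def colNorm {ι : Type*} [Fintype ι] (M : Matrix ι ι ℝ) : ℝ :=
  ⨆ q, ∑ p, |M p q|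

/-- Local fecundity matrix: first row `(f 0, …, f (m-1))`, other rows zero. -/
def localF (m : ℕ) (f : Fin m → ℝ) : Matrix (Fin m) (Fin m) ℝ :=
  Matrix.of fun k' k => if (k' : ℕ) = 0 then f k else 0

/-- Local survival matrix: diagonal entries `sd k`, subdiagonal entries `ss k`,
all other entries zero. -/
def localS (m : ℕ) (sd ss : Fin m → ℝ) : Matrix (Fin m) (Fin m) ℝ :=
  Matrix.of fun k' k =>
    if k' = k then sd k else if (k' : ℕ) = (k : ℕ) + 1 then ss k else 0

/-- Global (block-diagonal) fecundity matrix `F = ⊕ᵢ Fⁱ`, indexed by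
(stage, patch) pairs. -/
def fecMat (m n : ℕ) (f : Fin m → Fin n → ℝ) :
    Matrix (Fin m × Fin n) (Fin m × Fin n) ℝ :=
  Matrix.of fun p q =>
    if p.2 = q.2 then localF m (fun k => f k q.2) p.1 q.1 else 0

/-- Global (block-diagonal) survival matrix `S = ⊕ᵢ Sⁱ`. -/
def survMat (m n : ℕ) (sd ss : Fin m → Fin n → ℝ) :
    Matrix (Fin m × Fin n) (Fin m × Fin n) ℝ :=
  Matrix.of fun p q =>
    if p.2 = q.2 then localS m (fun k => sd k q.2) (fun k => ss k q.2) p.1 q.1 else 0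

/-- Global dispersion matrix: the `(i,j)` patch block is `diag (d 0 i j, …, d (m-1) i j)`. -/
def dispMat (m n : ℕ) (d : Fin m → Fin n → Fin n → ℝ) :
    Matrix (Fin m × Fin n) (Fin m × Fin n) ℝ :=
  Matrix.of fun p q => if p.1 = q.1 then d q.1 p.2 q.2 else 0

/-- Next-generation matrix `N = D F (I - D S)⁻¹`. -/
noncomputable def nextGen (m n : ℕ) (f : Fin m → Fin n → ℝ)
    (sd ss : Fin m → Fin n → ℝ) (d : Fin m → Fin n → Fin n → ℝ) :
    Matrix (Fin m × Fin n) (Fin m × Fin n) ℝ :=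
  dispMat m n d * fecMat m n f * (1 - dispMat m n d * survMat m n sd ss)⁻¹

/-- Partial next-generation matrix `W = F (I - D S)⁻¹`. -/
noncomputable def partGen (m n : ℕ) (f : Fin m → Fin n → ℝ)
    (sd ss : Fin m → Fin n → ℝ) (d : Fin m → Fin n → Fin n → ℝ) :
    Matrix (Fin m × Fin n) (Fin m × Fin n) ℝ :=
  fecMat m n f * (1 - dispMat m n d * survMat m n sd ss)⁻¹

/-- Newborn submatrix: keep only the rows and columns with stage index `0`
(the newborn indices). -/
def newbornSub {m n : ℕ} (hm : 0 < m)
    (B : Matrix (Fin m × Fin n) (Fin m × Fin n) ℝ) : Matrix (Fin n) (Fin n) ℝ :=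
  Matrix.of fun i j => B (⟨0, hm⟩, i) (⟨0, hm⟩, j)

/-- The alternative net reproductive number `R̂₀ = max_{x ∈ 𝒳} ‖N x‖`, where `𝒳`
is the set of nonnegative `L¹`-unit vectors supported on the newborn indices. -/
noncomputable def altR0 (m n : ℕ)
    (N : Matrix (Fin m × Fin n) (Fin m × Fin n) ℝ) : ℝ :=
  sSup {r : ℝ | ∃ x : Fin m × Fin n → ℝ, (∀ p, 0 ≤ x p) ∧ (∑ p, |x p|) = 1 ∧
    (∀ p : Fin m × Fin n, (p.1 : ℕ) ≠ 0 → x p = 0) ∧ r = ∑ p, |N.mulVec x p|}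

open Polynomial in
theorem Matrix.mem_spectrum_mul_comm {K ι κ : Type*} [Field K] [Fintype ι] [Fintype κ]
    [DecidableEq ι] [DecidableEq κ] (A : Matrix ι κ K) (B : Matrix κ ι K) {μ : K} (hμ : μ ≠ 0) :
    μ ∈ spectrum K (A * B) ↔ μ ∈ spectrum K (B * A) := by
  have h := congrArg (fun p => p.IsRoot μ) (charpoly_mul_comm' A B)
  simpa [mem_spectrum_iff_isRoot_charpoly, hμ] using h

theorem Matrix.spectrum_mul_comm_diff_zero {K ι κ : Type*} [Field K] [Fintype ι] [Fintype κ]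
    [DecidableEq ι] [DecidableEq κ] (A : Matrix ι κ K) (B : Matrix κ ι K) :
    spectrum K (A * B) \ {0} = spectrum K (B * A) \ {0} := by
  ext μ
  simp only [Set.mem_sdiff, Set.mem_singleton_iff]
  exact and_congr_left (mem_spectrum_mul_comm A B)

theorem sSup_norm_image_insert_zero {S : Set ℂ} (hS : S.Finite) :
    sSup (norm '' insert 0 S) = sSup (norm '' S) := by
  rcases S.eq_empty_or_nonempty with rfl | hne
  · simp
  rw [Set.image_insert_eq, norm_zero, csSup_insert (hS.image _).bddAbove (hne.image _),
    sup_eq_right]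
  obtain ⟨μ, hμ⟩ := hne
  exact (norm_nonneg μ).trans (le_csSup (hS.image _).bddAbove ⟨μ, hμ, rfl⟩)

/- Inserting `0` makes the right side depend only on the nonzero spectrum; it is harmless even
for an empty spectrum, since `sSup ∅ = 0` in `ℝ`. -/
theorem specRad_eq_sSup_insert_zero {ι : Type*} [Fintype ι] [DecidableEq ι] (M : Matrix ι ι ℝ) :
    specRad M = sSup (norm '' insert 0 (spectrum ℂ (M.map Complex.ofReal) \ {0})) := by
  rw [Set.insert_sdiff_singleton, sSup_norm_image_insert_zero (Matrix.finite_spectrum _), specRad]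
  congr 1
  ext r
  simp [eq_comm]

theorem Matrix.map_ofReal_mul {ι κ ν : Type*} [Fintype κ] (A : Matrix ι κ ℝ) (B : Matrix κ ν ℝ) :
    (A * B).map Complex.ofReal = A.map Complex.ofReal * B.map Complex.ofReal :=
  Matrix.map_mul (f := Complex.ofRealHom)

theorem specRad_mul_comm {ι κ : Type*} [Fintype ι] [Fintype κ] [DecidableEq ι] [DecidableEq κ]
    (A : Matrix ι κ ℝ) (B : Matrix κ ι ℝ) : specRad (A * B) = specRad (B * A) := by
  rw [specRad_eq_sSup_insert_zero, specRad_eq_sSup_insert_zero, Matrix.map_ofReal_mul,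
    Matrix.map_ofReal_mul, Matrix.spectrum_mul_comm_diff_zero]

theorem specRad_submatrix_of_rows_eq_zero {ι κ : Type*} [Fintype ι] [Fintype κ] [DecidableEq ι]
    [DecidableEq κ] (B : Matrix ι ι ℝ) {e : κ → ι} (he : Function.Injective e)
    (hB : ∀ p, p ∉ Set.range e → ∀ q, B p q = 0) :
    specRad (B.submatrix e e) = specRad B := by
  have hBV : B.submatrix e id * (1 : Matrix ι ι ℝ).submatrix (Equiv.refl ι) e = B.submatrix e e :=
    mul_submatrix_one _ _ _
  have hUB : (1 : Matrix ι ι ℝ).submatrix id e * B.submatrix e id = B := by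
    ext p q
    simp only [mul_apply, submatrix_apply, id, one_apply]
    by_cases hp : p ∈ Set.range e
    · obtain ⟨k, rfl⟩ := hp
      rw [Finset.sum_eq_single k (fun j _ hj => by simp [he.ne hj.symm]) (by simp)]
      simp
    · rw [hB p hp q]
      exact Finset.sum_eq_zero fun k _ => by simp [show p ≠ e k from fun h => hp ⟨k, h.symm⟩]
  rw [← hBV, specRad_mul_comm]
  exact congrArg specRad hUB

theorem specRad_newbornSub {m n : ℕ} (hm : 0 < m) (B : Matrix (Fin m × Fin n) (Fin m × Fin n) ℝ)
    (hB : ∀ p q, (p.1 : ℕ) ≠ 0 → B p q = 0) :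
    specRad (newbornSub hm B) = specRad B := by
  refine specRad_submatrix_of_rows_eq_zero B (e := fun j => (⟨0, hm⟩, j))
    (fun i j h => (Prod.ext_iff.mp h).2) fun p hp q => hB p q fun h0 => hp ⟨p.2, ?_⟩
  ext <;> simp [h0]

section RowsOutsideNewborn

variable {m n : ℕ} (f : Fin m → Fin n → ℝ) (sd ss : Fin m → Fin n → ℝ)
  (d : Fin m → Fin n → Fin n → ℝ) {p : Fin m × Fin n} (q : Fin m × Fin n)

theorem fecMat_apply_eq_zero (hp : (p.1 : ℕ) ≠ 0) : fecMat m n f p q = 0 := by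
  simp [fecMat, localF, hp]

theorem partGen_apply_eq_zero (hp : (p.1 : ℕ) ≠ 0) : partGen m n f sd ss d p q = 0 := by
  rw [partGen, mul_apply]
  exact Finset.sum_eq_zero fun r _ => by rw [fecMat_apply_eq_zero f r hp, zero_mul]

theorem nextGen_eq_dispMat_mul_partGen :
    nextGen m n f sd ss d = dispMat m n d * partGen m n f sd ss d := by
  rw [nextGen, partGen, Matrix.mul_assoc]

theorem nextGen_apply_eq_zero (hp : (p.1 : ℕ) ≠ 0) : nextGen m n f sd ss d p q = 0 := by
  rw [nextGen_eq_dispMat_mul_partGen, mul_apply]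
  refine Finset.sum_eq_zero fun r _ => ?_
  by_cases hr : p.1 = r.1
  · rw [partGen_apply_eq_zero f sd ss d q (hr ▸ hp), mul_zero]
  · simp [dispMat, hr]

end RowsOutsideNewborn

theorem stmt3
    (m n : ℕ) (hm : 2 ≤ m)
    (f : Fin m → Fin n → ℝ)
    (sd ss : Fin m → Fin n → ℝ)
    (d : Fin m → Fin n → Fin n → ℝ) :
    specRad (newbornSub (show 0 < m by omega) (nextGen m n f sd ss d)) =
        specRad (nextGen m n f sd ss d) ∧
      specRad (newbornSub (show 0 < m by omega) (partGen m n f sd ss d)) =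
        specRad (partGen m n f sd ss d) :=
  ⟨specRad_newbornSub _ _ fun _ => nextGen_apply_eq_zero f sd ss d,
    specRad_newbornSub _ _ fun _ => partGen_apply_eq_zero f sd ss d⟩
end

section
/- There exists a vector ξ ∈ 𝒳 such that α ≤ R₀ = ‖N ξ‖ ≤ β, where α is the smallest column sum of the newborn submatrix N̄ (α = min_{j} ∑_{i=1}^n N̄_{ij}) and β is the largest column sum of N̄ (β = max_{j} ∑_{i=1}^n N̄_{ij}). -/
open Matrix BigOperators

/-!
Since `F` has nonzero entries only in newborn rows and `D` never mixes stages, every row of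
`N = D F (I - D S)⁻¹` outside the newborn indices vanishes. Hence the nonzero eigenvalues of `N`
are exactly those of the newborn block `N̄`, and `ρ(N)` is governed by `N̄`. The matrix `N` is
nonnegative: the column sums of `D S` equal those of `S`, which are `< 1`, so the Neumann series
of `(I - D S)⁻¹` converges. For the nonnegative matrix `N̄`, an `L¹` estimate on an eigenvector
bounds every eigenvalue by the largest column sum `β`, while Gelfand's formula, applied to
`N̄ᵀ` whose powers have row sums at least `αᵏ`, produces an eigenvalue of modulus at least `α`.
Finally, `x ↦ ‖N x‖` is affine on nonnegative vectors (it pairs `x` with the column sums of `N`),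
so a convex combination of the two newborn unit vectors at the columns realising `α` and `β`
attains `ρ(N)`.
-/

namespace Matrix

section Square

variable {ι : Type*} [Fintype ι]

theorem mul_apply_nonneg {A B : Matrix ι ι ℝ} (hA : ∀ i j, 0 ≤ A i j) (hB : ∀ i j, 0 ≤ B i j)
    (i j : ι) : 0 ≤ (A * B) i j :=
  Finset.sum_nonneg fun l _ => mul_nonneg (hA i l) (hB l j)

theorem sum_abs_mulVec_of_nonneg {A : Matrix ι ι ℝ} (hA : ∀ i j, 0 ≤ A i j) {x : ι → ℝ}
    (hx : ∀ i, 0 ≤ x i) : ∑ i, |(A *ᵥ x) i| = (1 ᵥ* A) ⬝ᵥ x := by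
  rw [← dotProduct_mulVec, one_dotProduct]
  exact Finset.sum_congr rfl fun i _ =>
    abs_of_nonneg (Finset.sum_nonneg fun j _ => mul_nonneg (hA i j) (hx j))

variable [DecidableEq ι]

theorem exists_sum_abs_mulVec_eq_of_mem_segment {A : Matrix ι ι ℝ} (hA : ∀ i j, 0 ≤ A i j)
    {j₀ j₁ : ι} {r : ℝ} (hr : r ∈ segment ℝ ((1 ᵥ* A) j₀) ((1 ᵥ* A) j₁)) :
    ∃ x : ι → ℝ, (∀ i, 0 ≤ x i) ∧ ∑ i, |x i| = 1 ∧ (∀ i, i ≠ j₀ → i ≠ j₁ → x i = 0) ∧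
      ∑ i, |(A *ᵥ x) i| = r := by
  obtain ⟨a, b, ha, hb, hab, rfl⟩ := hr
  set x : ι → ℝ := a • Pi.single j₀ 1 + b • Pi.single j₁ 1
  have hx (i : ι) : 0 ≤ x i := by
    simp only [x, Pi.add_apply, Pi.smul_apply, Pi.single_apply, smul_eq_mul]
    split_ifs <;> positivity
  refine ⟨x, hx, ?_, fun i h₀ h₁ => by simp [x, h₀, h₁], ?_⟩
  · rw [Finset.sum_congr rfl fun i _ => abs_of_nonneg (hx i)]
    simp [x, Finset.sum_add_distrib, ← Finset.mul_sum, hab]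
  · rw [sum_abs_mulVec_of_nonneg hA hx]
    simp [x, dotProduct_add, dotProduct_smul, dotProduct_single]

theorem mem_spectrum_iff_exists_mulVec_eq_smul {K : Type*} [Field K] (A : Matrix ι ι K) (μ : K) :
    μ ∈ spectrum K A ↔ ∃ v, v ≠ 0 ∧ A *ᵥ v = μ • v := by
  rw [← spectrum_toLin', ← Module.End.hasEigenvalue_iff_mem_spectrum]
  constructor
  · intro h
    obtain ⟨v, hv⟩ := h.exists_hasEigenvector
    exact ⟨v, hv.2, by simpa using hv.apply_eq_smul⟩
  · rintro ⟨v, hv, h⟩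
    exact Module.End.hasEigenvalue_of_hasEigenvector
      ⟨Module.End.mem_eigenspace_iff.2 (by simpa using h), hv⟩

theorem pow_le_sum_pow_apply {A : Matrix ι ι ℝ} (hA : ∀ i j, 0 ≤ A i j) {α : ℝ} (hα0 : 0 ≤ α)
    (hα : ∀ j, α ≤ ∑ i, A i j) (k : ℕ) (j : ι) : α ^ k ≤ ∑ i, (A ^ k) i j := by
  induction k generalizing j with
  | zero => simp [one_apply]
  | succ k ih =>
    calc α ^ (k + 1) = α * α ^ k := pow_succ' α k
      _ ≤ α * ∑ l, (A ^ k) l j := mul_le_mul_of_nonneg_left (ih j) hα0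
      _ ≤ ∑ l, (∑ i, A i l) * (A ^ k) l j := by
          rw [Finset.mul_sum]
          exact Finset.sum_le_sum fun l _ =>
            mul_le_mul_of_nonneg_right (hα l) (pow_apply_nonneg hA k l j)
      _ = ∑ i, (A ^ (k + 1)) i j := by
          simp only [pow_succ', mul_apply, Finset.sum_mul]
          exact Finset.sum_comm

theorem norm_le_of_mem_spectrum_of_sum_abs_le {A : Matrix ι ι ℝ} {β : ℝ}
    (hβ : ∀ j, ∑ i, |A i j| ≤ β) {μ : ℂ} (hμ : μ ∈ spectrum ℂ (A.map Complex.ofReal)) :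
    ‖μ‖ ≤ β := by
  obtain ⟨v, hv, hAv⟩ := (mem_spectrum_iff_exists_mulVec_eq_smul _ μ).1 hμ
  have hv_pos : 0 < ∑ j, ‖v j‖ := by
    obtain ⟨j, hj⟩ := Function.ne_iff.1 hv
    exact Finset.sum_pos' (fun j _ => norm_nonneg _) ⟨j, Finset.mem_univ j, norm_pos_iff.2 hj⟩
  refine le_of_mul_le_mul_right ?_ hv_pos
  calc ‖μ‖ * ∑ j, ‖v j‖ = ∑ i, ‖(A.map Complex.ofReal *ᵥ v) i‖ := by
        simp [hAv, Finset.mul_sum]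
    _ ≤ ∑ i, ∑ j, |A i j| * ‖v j‖ := by
        refine Finset.sum_le_sum fun i _ => (norm_sum_le _ _).trans_eq ?_
        simp
    _ = ∑ j, (∑ i, |A i j|) * ‖v j‖ := by
        rw [Finset.sum_comm]
        simp only [Finset.sum_mul]
    _ ≤ β * ∑ j, ‖v j‖ := by
        rw [Finset.mul_sum]
        exact Finset.sum_le_sum fun j _ => mul_le_mul_of_nonneg_right (hβ j) (norm_nonneg _)

section LinftyOpNorm

attribute [local instance] Matrix.linftyOpNormedRing Matrix.linftyOpNormedAlgebra

theorem inv_one_sub_apply_nonneg {A : Matrix ι ι ℝ} (hA : ∀ i j, 0 ≤ A i j)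
    (hcol : ∀ j, ∑ i, A i j < 1) (i j : ι) : 0 ≤ (1 - A)⁻¹ i j := by
  -- Neumann series for `Aᵀ`, whose `∞`-operator norm is the largest column sum of `A`
  have hA1 : ‖Aᵀ‖₊ < 1 := by
    rw [linfty_opNNNorm_def, Finset.sup_lt_iff zero_lt_one]
    intro j _
    rw [← NNReal.coe_lt_coe]
    push_cast
    simpa [abs_of_nonneg (hA _ j)] using hcol j
  have hsum := Pi.hasSum.1 (Pi.hasSum.1 (hasSum_geom_series_inverse Aᵀ hA1) j) i
  rw [← transpose_apply (1 - A)⁻¹, transpose_nonsing_inv, transpose_sub, transpose_one,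
    nonsing_inv_eq_ringInverse]
  exact hasSum_le (fun k => pow_apply_nonneg (fun i j => hA j i) k j i) hasSum_zero hsum

theorem exists_mem_spectrum_le_norm_of_le_sum [Nonempty ι] {A : Matrix ι ι ℝ}
    (hA : ∀ i j, 0 ≤ A i j) {α : ℝ} (hα0 : 0 ≤ α) (hα : ∀ j, α ≤ ∑ i, A i j) :
    ∃ μ ∈ spectrum ℂ (A.map Complex.ofReal), α ≤ ‖μ‖ := by
  -- the `∞`-operator norm of a transpose is the largest column sum
  set a : Matrix ι ι ℂ := (A.map Complex.ofReal)ᵀ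
  have hpow (k : ℕ) : α ^ k ≤ ‖a ^ k‖ := by
    obtain ⟨j⟩ := ‹Nonempty ι›
    have hak : a ^ k = ((A ^ k).map Complex.ofReal)ᵀ := by
      rw [← transpose_pow]
      exact congrArg transpose (map_pow Complex.ofRealHom.mapMatrix A k).symm
    calc α ^ k ≤ ∑ i, (A ^ k) i j := pow_le_sum_pow_apply hA hα0 hα k j
      _ = ((∑ i, ‖(a ^ k) j i‖₊ : NNReal) : ℝ) := by
          simp [hak, abs_of_nonneg (pow_apply_nonneg hA k _ j)]
      _ ≤ ‖a ^ k‖ := by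
          rw [linfty_opNorm_def, NNReal.coe_le_coe]
          exact Finset.le_sup (f := fun j => ∑ i, ‖(a ^ k) j i‖₊) (Finset.mem_univ j)
  have hρ : ENNReal.ofReal α ≤ spectralRadius ℂ a := by
    refine ge_of_tendsto (spectrum.pow_norm_pow_one_div_tendsto_nhds_spectralRadius a) ?_
    filter_upwards [Filter.eventually_ne_atTop 0] with k hk
    refine ENNReal.ofReal_le_ofReal ?_
    calc α = (α ^ k) ^ (1 / k : ℝ) := by rw [one_div, Real.pow_rpow_inv_natCast hα0 hk]
      _ ≤ ‖a ^ k‖ ^ (1 / k : ℝ) := by gcongr; exact hpow k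
  obtain ⟨μ, hμ, hμρ⟩ := spectrum.exists_nnnorm_eq_spectralRadius a
  refine ⟨μ, ?_, ?_⟩
  · rwa [mem_spectrum_iff_isRoot_charpoly, charpoly_transpose,
      ← mem_spectrum_iff_isRoot_charpoly] at hμ
  · rw [← hμρ, ENNReal.ofReal_le_iff_le_toReal ENNReal.coe_ne_top] at hρ
    simpa using hρ

end LinftyOpNorm

end Square

section Slice

variable {κ ι K : Type*} [Fintype κ] [Fintype ι] [Field K] {A : Matrix (κ × ι) (κ × ι) K}
  {z : κ}

theorem mulVec_apply_eq_sum_slice {v : κ × ι → K} (hv : ∀ p, p.1 ≠ z → v p = 0) (p : κ × ι) :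
    (A *ᵥ v) p = ∑ j, A p (z, j) * v (z, j) := by
  rw [mulVec, dotProduct, Fintype.sum_prod_type, Fintype.sum_eq_single z]
  exact fun k hk => Finset.sum_eq_zero fun j _ => by rw [hv (k, j) hk, mul_zero]

theorem sum_apply_eq_sum_slice (hA : ∀ p q, p.1 ≠ z → A p q = 0) (q : κ × ι) :
    ∑ p, A p q = ∑ i, A (z, i) q := by
  rw [Fintype.sum_prod_type, Fintype.sum_eq_single z]
  exact fun k hk => Finset.sum_eq_zero fun i _ => hA (k, i) q hk

variable [DecidableEq κ] [DecidableEq ι]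

theorem mem_spectrum_of_mem_spectrum_submatrix (hA : ∀ p q, p.1 ≠ z → A p q = 0) {μ : K}
    (hμ : μ ∈ spectrum K (A.submatrix (Prod.mk z) (Prod.mk z))) : μ ∈ spectrum K A := by
  rw [mem_spectrum_iff_exists_mulVec_eq_smul] at hμ ⊢
  obtain ⟨w, hw, hAw⟩ := hμ
  set v : κ × ι → K := fun p => if p.1 = z then w p.2 else 0
  have hv : ∀ p, p.1 ≠ z → v p = 0 := fun p hp => if_neg hp
  refine ⟨v, fun h => hw (funext fun i => by simpa [v] using congrFun h (z, i)),
    funext fun p => ?_⟩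
  rw [mulVec_apply_eq_sum_slice hv]
  by_cases hp : p.1 = z
  · obtain ⟨k, i⟩ := p
    obtain rfl : k = z := hp
    simpa [v, mulVec, dotProduct] using congrFun hAw i
  · simp [v, hA p _ hp, hp]

theorem mem_spectrum_submatrix_of_mem_spectrum (hA : ∀ p q, p.1 ≠ z → A p q = 0) {μ : K}
    (hμ0 : μ ≠ 0) (hμ : μ ∈ spectrum K A) :
    μ ∈ spectrum K (A.submatrix (Prod.mk z) (Prod.mk z)) := by
  rw [mem_spectrum_iff_exists_mulVec_eq_smul] at hμ ⊢
  obtain ⟨v, hv, hAv⟩ := hμ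
  have hvz : ∀ p, p.1 ≠ z → v p = 0 := fun p hp => by
    have h := congrFun hAv p
    simp only [mulVec, dotProduct, hA p _ hp, zero_mul, Finset.sum_const_zero, Pi.smul_apply,
      smul_eq_mul] at h
    exact (mul_eq_zero.1 h.symm).resolve_left hμ0
  refine ⟨fun i => v (z, i), fun h => hv (funext fun p => ?_), funext fun i => ?_⟩
  · by_cases hp : p.1 = z
    · simpa [← hp] using congrFun h p.2
    · exact hvz p hp
  · have h := congrFun hAv (z, i)
    rw [mulVec_apply_eq_sum_slice hvz] at h
    simpa [mulVec, dotProduct] using h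

end Slice

end Matrix

open Matrix

theorem specRad_eq_sSup_image {ι : Type*} [Fintype ι] [DecidableEq ι] (M : Matrix ι ι ℝ) :
    specRad M = sSup (norm '' spectrum ℂ (M.map Complex.ofReal)) := by
  simp only [specRad, Set.image, eq_comm]

theorem specRad_mem_Icc_of_slice_sum {κ ι : Type*} [Fintype κ] [Fintype ι] [DecidableEq κ]
    [DecidableEq ι] [Nonempty ι] {A : Matrix (κ × ι) (κ × ι) ℝ} {z : κ}
    (hA0 : ∀ p q, 0 ≤ A p q) (hA : ∀ p q, p.1 ≠ z → A p q = 0) {α β : ℝ} (hα0 : 0 ≤ α)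
    (hα : ∀ j, α ≤ ∑ i, A (z, i) (z, j)) (hβ : ∀ j, ∑ i, A (z, i) (z, j) ≤ β) :
    specRad A ∈ Set.Icc α β := by
  set B := A.submatrix (Prod.mk z) (Prod.mk z)
  have hAℂ : ∀ p q, p.1 ≠ z → A.map Complex.ofReal p q = 0 := fun p q hp => by
    simp [hA p q hp]
  obtain ⟨μ, hμ, hαμ⟩ := exists_mem_spectrum_le_norm_of_le_sum (A := B) (fun i j => hA0 _ _) hα0 hα
  rw [← submatrix_map] at hμ
  replace hμ := mem_spectrum_of_mem_spectrum_submatrix hAℂ hμ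
  rw [specRad_eq_sSup_image]
  refine ⟨hαμ.trans (le_csSup ((finite_spectrum _).image _).bddAbove ⟨μ, hμ, rfl⟩),
    csSup_le ⟨_, μ, hμ, rfl⟩ ?_⟩
  rintro _ ⟨ν, hν, rfl⟩
  rcases eq_or_ne ν 0 with rfl | hν0
  · obtain ⟨j⟩ := ‹Nonempty ι›
    simpa using hα0.trans ((hα j).trans (hβ j))
  · refine norm_le_of_mem_spectrum_of_sum_abs_le (A := B) (fun j => ?_) ?_
    · simpa [B, abs_of_nonneg (hA0 _ _)] using hβ j
    · rw [← submatrix_map]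
      exact mem_spectrum_submatrix_of_mem_spectrum hAℂ hν0 hν

section Model

variable {m n : ℕ}

theorem dispMat_nonneg {d : Fin m → Fin n → Fin n → ℝ} (hd0 : ∀ k i j, 0 ≤ d k i j)
    (p q : Fin m × Fin n) : 0 ≤ dispMat m n d p q := by
  simp only [dispMat, of_apply]
  split_ifs <;> simp [*]

theorem fecMat_nonneg {f : Fin m → Fin n → ℝ} (hf : ∀ k i, 0 ≤ f k i) (p q : Fin m × Fin n) :
    0 ≤ fecMat m n f p q := by
  simp only [fecMat, localF, of_apply]
  split_ifs <;> simp [*]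

theorem survMat_nonneg {sd ss : Fin m → Fin n → ℝ} (hsd : ∀ k i, 0 ≤ sd k i)
    (hss : ∀ k i, 0 ≤ ss k i) (p q : Fin m × Fin n) : 0 ≤ survMat m n sd ss p q := by
  simp only [survMat, localS, of_apply]
  split_ifs <;> simp [*]

theorem sum_dispMat_mul_apply {d : Fin m → Fin n → Fin n → ℝ} (hdsum : ∀ k j, ∑ i, d k i j = 1)
    (M : Matrix (Fin m × Fin n) (Fin m × Fin n) ℝ) (q : Fin m × Fin n) :
    ∑ p, (dispMat m n d * M) p q = ∑ p, M p q := by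
  have hD : ∀ r, ∑ p, dispMat m n d p r = 1 := fun r => by
    simp [dispMat, Fintype.sum_prod_type, hdsum]
  simp only [mul_apply]
  rw [Finset.sum_comm]
  simp [← Finset.sum_mul, hD]

theorem sum_localS_apply (sd ss : Fin m → ℝ) (k : Fin m) :
    ∑ k', localS m sd ss k' k = sd k + if (k : ℕ) + 1 < m then ss k else 0 := by
  have hsplit : ∀ k' : Fin m, localS m sd ss k' k =
      (if k' = k then sd k else 0) + if (k' : ℕ) = k + 1 then ss k else 0 := fun k' => by
    simp only [localS, of_apply]
    split_ifs <;> simp_all [Fin.ext_iff]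
  rw [Finset.sum_congr rfl fun k' _ => hsplit k', Finset.sum_add_distrib, Finset.sum_ite_eq',
    if_pos (Finset.mem_univ k),
    Fin.sum_univ_eq_sum_range (fun i => if i = (k : ℕ) + 1 then ss k else 0),
    Finset.sum_ite_eq']
  simp only [Finset.mem_range]

theorem sum_survMat_apply (sd ss : Fin m → Fin n → ℝ) (q : Fin m × Fin n) :
    ∑ p, survMat m n sd ss p q = sd q.1 q.2 + if (q.1 : ℕ) + 1 < m then ss q.1 q.2 else 0 := by
  rw [Fintype.sum_prod_type_right]
  simp [survMat, sum_localS_apply]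

theorem dispMat_mul_fecMat_apply_of_ne_zero (d : Fin m → Fin n → Fin n → ℝ)
    (f : Fin m → Fin n → ℝ) {p : Fin m × Fin n} (hp : (p.1 : ℕ) ≠ 0) (q : Fin m × Fin n) :
    (dispMat m n d * fecMat m n f) p q = 0 := by
  refine Finset.sum_eq_zero fun r _ => ?_
  by_cases h : p.1 = r.1
  · simp [fecMat, localF, ← h, hp]
  · simp [dispMat, h]

theorem inv_one_sub_dispMat_mul_survMat_nonneg {sd ss : Fin m → Fin n → ℝ}
    (hsd : ∀ k i, 0 ≤ sd k i) (hss : ∀ k i, 0 ≤ ss k i)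
    (hs1 : ∀ (k : Fin m) (i : Fin n), sd k i + (if (k : ℕ) + 1 < m then ss k i else 0) < 1)
    {d : Fin m → Fin n → Fin n → ℝ} (hd0 : ∀ k i j, 0 ≤ d k i j)
    (hdsum : ∀ k j, ∑ i, d k i j = 1) (p q : Fin m × Fin n) :
    0 ≤ (1 - dispMat m n d * survMat m n sd ss)⁻¹ p q := by
  refine inv_one_sub_apply_nonneg (mul_apply_nonneg (dispMat_nonneg hd0)
    (survMat_nonneg hsd hss)) (fun q => ?_) p q
  rw [sum_dispMat_mul_apply hdsum, sum_survMat_apply]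
  exact hs1 q.1 q.2

theorem nextGen_nonneg {f : Fin m → Fin n → ℝ} (hf : ∀ k i, 0 ≤ f k i)
    {sd ss : Fin m → Fin n → ℝ} (hsd : ∀ k i, 0 ≤ sd k i) (hss : ∀ k i, 0 ≤ ss k i)
    (hs1 : ∀ (k : Fin m) (i : Fin n), sd k i + (if (k : ℕ) + 1 < m then ss k i else 0) < 1)
    {d : Fin m → Fin n → Fin n → ℝ} (hd0 : ∀ k i j, 0 ≤ d k i j)
    (hdsum : ∀ k j, ∑ i, d k i j = 1) (p q : Fin m × Fin n) :
    0 ≤ nextGen m n f sd ss d p q :=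
  mul_apply_nonneg (mul_apply_nonneg (dispMat_nonneg hd0) (fecMat_nonneg hf))
    (inv_one_sub_dispMat_mul_survMat_nonneg hsd hss hs1 hd0 hdsum) p q

theorem nextGen_apply_of_ne_zero (f : Fin m → Fin n → ℝ) (sd ss : Fin m → Fin n → ℝ)
    (d : Fin m → Fin n → Fin n → ℝ) {p : Fin m × Fin n} (hp : (p.1 : ℕ) ≠ 0)
    (q : Fin m × Fin n) : nextGen m n f sd ss d p q = 0 := by
  rw [nextGen, mul_apply]
  exact Finset.sum_eq_zero fun r _ => by rw [dispMat_mul_fecMat_apply_of_ne_zero d f hp, zero_mul]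

end Model

theorem stmt7
    (m n : ℕ) (hm : 2 ≤ m) (hn : 1 ≤ n)
    (f : Fin m → Fin n → ℝ) (hf : ∀ k i, 0 ≤ f k i)
    (sd ss : Fin m → Fin n → ℝ)
    (hsd : ∀ k i, 0 ≤ sd k i) (hss : ∀ k i, 0 ≤ ss k i)
    (hs1 : ∀ (k : Fin m) (i : Fin n),
      sd k i + (if (k : ℕ) + 1 < m then ss k i else 0) < 1)
    (d : Fin m → Fin n → Fin n → ℝ)
    (hd0 : ∀ k i j, 0 ≤ d k i j)
    (hdsum : ∀ k j, ∑ i, d k i j = 1) :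
    ∃ ξ : Fin m × Fin n → ℝ,
      (∀ p, 0 ≤ ξ p) ∧ (∑ p, |ξ p|) = 1 ∧
      (∀ p : Fin m × Fin n, (p.1 : ℕ) ≠ 0 → ξ p = 0) ∧
      (⨅ j : Fin n, ∑ i : Fin n,
          newbornSub (show 0 < m by omega) (nextGen m n f sd ss d) i j) ≤
        specRad (nextGen m n f sd ss d) ∧
      specRad (nextGen m n f sd ss d) = ∑ p, |(nextGen m n f sd ss d).mulVec ξ p| ∧
      specRad (nextGen m n f sd ss d) ≤
        ⨆ j : Fin n, ∑ i : Fin n,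
          newbornSub (show 0 < m by omega) (nextGen m n f sd ss d) i j := by
  set z : Fin m := ⟨0, by omega⟩
  have : Nonempty (Fin n) := ⟨⟨0, hn⟩⟩
  have hN0 := nextGen_nonneg hf hsd hss hs1 hd0 hdsum
  have hNz : ∀ p q, p.1 ≠ z → nextGen m n f sd ss d p q = 0 := fun p q hp =>
    nextGen_apply_of_ne_zero f sd ss d (fun h => hp (Fin.ext h)) q
  generalize nextGen m n f sd ss d = N at hN0 hNz ⊢
  set c : Fin n → ℝ := fun j => ∑ i, newbornSub (show 0 < m by omega) N i j
  have hc (j : Fin n) : (1 ᵥ* N) (z, j) = c j := by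
    simp [vecMul, dotProduct, sum_apply_eq_sum_slice hNz, c, newbornSub, z]
  obtain ⟨j₀, hj₀⟩ := Finite.exists_min c
  obtain ⟨j₁, hj₁⟩ := Finite.exists_max c
  have hρ : specRad N ∈ Set.Icc (c j₀) (c j₁) :=
    specRad_mem_Icc_of_slice_sum hN0 hNz (Finset.sum_nonneg fun i _ => hN0 _ _) hj₀ hj₁
  have hseg : specRad N ∈ segment ℝ ((1 ᵥ* N) (z, j₀)) ((1 ᵥ* N) (z, j₁)) := by
    rwa [hc, hc, segment_eq_Icc (hρ.1.trans hρ.2)]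
  obtain ⟨ξ, hξ0, hξ1, hξz, hξρ⟩ := exists_sum_abs_mulVec_eq_of_mem_segment hN0 hseg
  refine ⟨ξ, hξ0, hξ1, fun p hp => hξz p ?_ ?_,
    (ciInf_le (Set.finite_range c).bddBelow j₀).trans hρ.1, hξρ.symm,
    hρ.2.trans (le_ciSup (Set.finite_range c).bddAbove j₁)⟩ <;>
  exact fun h => hp (by simp [h, z])
end
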